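/- For all real x > 0, sinh(x)/x < (2 + cosh(x))/3. -/

import Mathlib

/-!
Clear denominators and differentiate three times: for each of the inequalities
`sinh x < x cosh x`, `2 cosh x < 2 + x sinh x`, `3 sinh x < x (2 + cosh x)`, the gap between
its two sides vanishes at `0` and has as derivative the gap of the previous one (for the first,
`y sinh y`), so it is strictly increasing on `[0, ∞)`.
-/

open Real Set

lemma pos_of_hasDerivAt_of_map_zero {f f' : ℝ → ℝ} (hf : ∀ y, HasDerivAt f (f' y) y)
    (h₀ : f 0 = 0) (hf' : ∀ y, 0 < y → 0 < f' y) {x : ℝ} (hx : 0 < x) : 0 < f x := by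
  have hmono : StrictMonoOn f (Ici 0) := by
    refine strictMonoOn_of_deriv_pos (convex_Ici 0)
      (fun y _ => (hf y).continuousAt.continuousWithinAt) fun y hy => ?_
    rw [interior_Ici] at hy
    exact (hf y).deriv ▸ hf' y hy
  simpa [h₀] using hmono self_mem_Ici hx.le hx

lemma Real.sinh_lt_mul_cosh {x : ℝ} (hx : 0 < x) : sinh x < x * cosh x := by
  have := pos_of_hasDerivAt_of_map_zero (f := fun y => y * cosh y - sinh y)
    (fun y => (((hasDerivAt_id y).mul (hasDerivAt_cosh y)).sub (hasDerivAt_sinh y)).congr_deriv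
      (by simp only [id_eq]; ring))
    (by simp) (fun y hy => mul_pos hy (sinh_pos_iff.mpr hy)) hx
  linarith

lemma Real.two_mul_cosh_lt {x : ℝ} (hx : 0 < x) : 2 * cosh x < 2 + x * sinh x := by
  have := pos_of_hasDerivAt_of_map_zero (f := fun y => 2 + y * sinh y - 2 * cosh y)
    (fun y => ((((hasDerivAt_id y).mul (hasDerivAt_sinh y)).const_add 2).sub
      ((hasDerivAt_cosh y).const_mul 2)).congr_deriv (by simp only [id_eq]; ring))
    (by simp) (fun y hy => sub_pos.mpr (sinh_lt_mul_cosh hy)) hx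
  linarith

lemma Real.three_mul_sinh_lt {x : ℝ} (hx : 0 < x) : 3 * sinh x < x * (2 + cosh x) := by
  have := pos_of_hasDerivAt_of_map_zero (f := fun y => y * (2 + cosh y) - 3 * sinh y)
    (fun y => (((hasDerivAt_id y).mul ((hasDerivAt_cosh y).const_add 2)).sub
      ((hasDerivAt_sinh y).const_mul 3)).congr_deriv (by simp only [id_eq]; ring))
    (by simp) (fun y hy => sub_pos.mpr (two_mul_cosh_lt hy)) hx
  linarith

theorem hyperbolic_cusa (x : ℝ) (hx : 0 < x) :
    Real.sinh x / x < (2 + Real.cosh x) / 3 := by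
  rw [div_lt_div_iff₀ hx three_pos]
  linarith [three_mul_sinh_lt hx]
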